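/- A globally symmetric Finsler space $(G/H,F)$ of rank greater than 1 does not satisfy the (FP) condition: there exists a tangent plane $\mathbf{P}\subset T_o(G/H)$ such that $K^F(o,u,\mathbf{P})=0$ for every nonzero $u\in\mathbf{P}$. -/
import Mathlib


noncomputable section

/-- The fundamental tensor `g_y(u,v) = ½ D²(F²)(y)[u,v]` of a Minkowski norm `F`
on a real vector space, expressed via iterated Fréchet derivatives. -/
def fundamentalTensor {E : Type*} [NormedAddCommGroup E] [NormedSpace ℝ E]
    (F : E → ℝ) (y u v : E) : ℝ :=
  (fderiv ℝ (fun z => (fderiv ℝ (fun w => F w ^ 2 / 2) z) v) y) u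

/-- A Minkowski norm on a finite-dimensional real vector space: continuous, nonnegative,
positive and smooth away from `0`, positively `1`-homogeneous, and with positive definite
fundamental tensor (Hessian of `F²/2`) at every nonzero point. -/
structure IsMinkowskiNorm {E : Type*} [NormedAddCommGroup E] [NormedSpace ℝ E]
    (F : E → ℝ) : Prop where
  continuous : Continuous F
  nonneg : ∀ v, 0 ≤ F v
  pos : ∀ v, v ≠ 0 → 0 < F v
  smooth : ContDiffOn ℝ (⊤ : ℕ∞) F {0}ᶜ
  homogeneous : ∀ c : ℝ, 0 ≤ c → ∀ v, F (c • v) = c * F v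
  strongly_convex : ∀ y, y ≠ 0 → ∀ u, u ≠ 0 → 0 < fundamentalTensor F y u u


/-- A globally symmetric Finsler space `(G/H, F)` of rank greater than one
does not satisfy the (FP) condition.  Setting: `𝔤 = 𝔥 + 𝔪` is a Cartan decomposition
(`⁅𝔪,𝔪⁆ ⊂ 𝔥`), `𝔪` is identified with `V = T_o(G/H)` via `φ`, `F` is the induced Minkowski
norm, `K` is the flag curvature at `o`, which satisfies the symmetric space flag curvature
formula; the rank hypothesis supplies a `2`-dimensional abelian subspace of `𝔪` (spanned by
`a, b` with `⁅a, b⁆ = 0`).  Conclusion: there exists a tangent plane `P ⊂ T_o(G/H)` such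
that `K(o, u, P) = 0` for every nonzero `u ∈ P`. -/
theorem symmetric_rank_ge_two_not_FP
    {g : Type*} [LieRing g] [LieAlgebra ℝ g] [Module.Finite ℝ g]
    (𝔥 : LieSubalgebra ℝ g) (𝔪 : Submodule ℝ g)
    (hcompl : IsCompl 𝔥.toSubmodule 𝔪)
    (h𝔥𝔪 : ∀ x ∈ 𝔥, ∀ y ∈ 𝔪, ⁅x, y⁆ ∈ 𝔪)
    (h𝔪𝔪 : ∀ x ∈ 𝔪, ∀ y ∈ 𝔪, ⁅x, y⁆ ∈ 𝔥)
    {V : Type*} [NormedAddCommGroup V] [NormedSpace ℝ V] [FiniteDimensional ℝ V]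
    (φ : ↥𝔪 ≃ₗ[ℝ] V)
    (F : V → ℝ) (hF : IsMinkowskiNorm F)
    (K : V → Submodule ℝ V → ℝ)
    -- the symmetric space flag curvature formula (Lemma on Cartan decompositions):
    (hK : ∀ u v : ↥𝔪, LinearIndependent ℝ ![u, v] →
      K (φ u) (Submodule.span ℝ {φ u, φ v}) =
        fundamentalTensor F (φ u)
            (φ ⟨⁅⁅(v : g), (u : g)⁆, (v : g)⁆,
              h𝔥𝔪 _ (h𝔪𝔪 _ v.2 _ u.2) _ v.2⟩) (φ u) /
          (fundamentalTensor F (φ u) (φ u) (φ u) * fundamentalTensor F (φ u) (φ v) (φ v) -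
            fundamentalTensor F (φ u) (φ u) (φ v) *
              fundamentalTensor F (φ u) (φ u) (φ v)))
    -- rank greater than one: a two-dimensional abelian subspace of `𝔪`:
    (a b : ↥𝔪) (hab : LinearIndependent ℝ ![a, b]) (habelian : ⁅(a : g), (b : g)⁆ = 0) :
    ∃ P : Submodule ℝ V, Module.finrank ℝ P = 2 ∧
      ∀ u : V, u ∈ P → u ≠ 0 → K u P = 0 := by
  classical
  refine ⟨Submodule.span ℝ {φ a, φ b}, ?_, ?_⟩
  · have hind : LinearIndependent ℝ ![φ a, φ b] := by
      have h := hab.map' φ.toLinearMap φ.ker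
      have : (⇑φ.toLinearMap ∘ ![a, b]) = ![φ a, φ b] := by
        funext i; fin_cases i <;> simp
      rwa [this] at h
    have : ({φ a, φ b} : Set V) = Set.range ![φ a, φ b] := by
      simp [Matrix.range_cons, Matrix.range_empty, Set.union_comm, Set.pair_comm]
    rw [this, finrank_span_eq_card hind]
    simp
  · intro u hu hu0
    obtain ⟨c, d, hcd⟩ := Submodule.mem_span_pair.mp hu
    set m : ↥𝔪 := c • a + d • b with hm
    have hφm : φ m = u := by simp [hm, map_add, map_smul, hcd]
    have habR : ∀ s t : ℝ, s • a + t • b = 0 → s = 0 ∧ t = 0 :=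
      LinearIndependent.pair_iff.mp hab
    -- choose v complementing m inside span {a, b}
    by_cases hd : d = 0
    · -- then c ≠ 0, take v = b
      have hc : c ≠ 0 := by
        intro hc; apply hu0; rw [← hφm, hm, hc, hd]; simp
      have hmb : LinearIndependent ℝ ![m, b] := by
        rw [LinearIndependent.pair_iff]
        intro s t hst
        have : (s * c) • a + (s * d + t) • b = 0 := by
          rw [hm] at hst; rw [← hst]; module
        obtain ⟨h1, h2⟩ := habR _ _ this
        have hs : s = 0 := by
          rcases mul_eq_zero.mp h1 with h | h
          · exact h
          · exact absurd h hc
        refine ⟨hs, ?_⟩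
        simpa [hs] using h2
      have hbr : ⁅⁅(b : g), (m : g)⁆, (b : g)⁆ = 0 := by
        have : ⁅(b : g), (m : g)⁆ = 0 := by
          have hmg : (m : g) = c • (a : g) + d • (b : g) := by simp [hm]
          rw [hmg]
          have hba : ⁅(b : g), (a : g)⁆ = 0 := by
            rw [← lie_skew, habelian, neg_zero]
          simp [lie_add, lie_smul, hba, habelian]
        rw [this, zero_lie]
      have hspan : Submodule.span ℝ ({φ m, φ b} : Set V) =
          Submodule.span ℝ ({φ a, φ b} : Set V) := by
        apply le_antisymm
        · rw [Submodule.span_le]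
          rintro x (rfl | rfl)
          · exact Submodule.mem_span_pair.mpr ⟨c, d, by simp [hm, map_add, map_smul]⟩
          · exact Submodule.subset_span (by simp)
        · rw [Submodule.span_le]
          rintro x (rfl | rfl)
          · refine Submodule.mem_span_pair.mpr ⟨c⁻¹, 0, ?_⟩
            simp [hm, hd, map_add, map_smul, smul_smul, inv_mul_cancel₀ hc]
          · exact Submodule.subset_span (by simp)
      have hKval := hK m b hmb
      rw [hspan, hφm] at hKval
      rw [hKval]
      have : (⟨⁅⁅(b : g), (m : g)⁆, (b : g)⁆,
          h𝔥𝔪 _ (h𝔪𝔪 _ b.2 _ m.2) _ b.2⟩ : ↥𝔪) = 0 := by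
        exact Subtype.ext hbr
      rw [this, map_zero]
      simp [fundamentalTensor]
    · -- d ≠ 0, take v = a
      have hma : LinearIndependent ℝ ![m, a] := by
        rw [LinearIndependent.pair_iff]
        intro s t hst
        have : (s * c + t) • a + (s * d) • b = 0 := by
          rw [hm] at hst; rw [← hst]; module
        obtain ⟨h1, h2⟩ := habR _ _ this
        have hs : s = 0 := by
          rcases mul_eq_zero.mp h2 with h | h
          · exact h
          · exact absurd h hd
        refine ⟨hs, ?_⟩
        simpa [hs] using h1
      have hbr : ⁅⁅(a : g), (m : g)⁆, (a : g)⁆ = 0 := by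
        have : ⁅(a : g), (m : g)⁆ = 0 := by
          have hmg : (m : g) = c • (a : g) + d • (b : g) := by simp [hm]
          rw [hmg]
          simp [lie_add, lie_smul, habelian]
        rw [this, zero_lie]
      have hspan : Submodule.span ℝ ({φ m, φ a} : Set V) =
          Submodule.span ℝ ({φ a, φ b} : Set V) := by
        apply le_antisymm
        · rw [Submodule.span_le]
          rintro x (rfl | rfl)
          · exact Submodule.mem_span_pair.mpr ⟨c, d, by simp [hm, map_add, map_smul]⟩
          · exact Submodule.subset_span (by simp)
        · rw [Submodule.span_le]
          rintro x (rfl | rfl)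
          · exact Submodule.mem_span_pair.mpr ⟨0, 1, by simp⟩
          · refine Submodule.mem_span_pair.mpr ⟨d⁻¹, -(d⁻¹ * c), ?_⟩
            simp only [hm, map_add, map_smul, smul_add, smul_smul, neg_smul]
            rw [inv_mul_cancel₀ hd]
            module
      have hKval := hK m a hma
      rw [hspan, hφm] at hKval
      rw [hKval]
      have : (⟨⁅⁅(a : g), (m : g)⁆, (a : g)⁆,
          h𝔥𝔪 _ (h𝔪𝔪 _ a.2 _ m.2) _ a.2⟩ : ↥𝔪) = 0 := by
        exact Subtype.ext hbr
      rw [this, map_zero]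
      simp [fundamentalTensor]
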